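/- Let f and g be smooth real-valued functions on S¹ with zero mean. Then ∂₁f·∂₁Λg − ∂₁²(∂₁f·Hg) − [Λ,f]∂₁²g + ∂₁²([Λ,f]g) − Λ(∂₁²f·g + 2∂₁f·∂₁g) = −∂₁([∂₁²,f]Hg) pointwise on S¹, where [∂₁²,f]w = ∂₁²(fw) − f·∂₁²w. -/

import Mathlib

open Complex Filter MeasureTheory

noncomputable section

instance : Fact (0 < 2 * Real.pi) := ⟨by positivity⟩

/-- Hilbert transform on the circle `S¹ = ℝ/2πℤ`: Fourier multiplier `-i·sgn k`. -/
def Hop (f : AddCircle (2 * Real.pi) → ℂ) : AddCircle (2 * Real.pi) → ℂ :=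
  fun x => ∑' k : ℤ, (-Complex.I) * (k.sign : ℂ) * fourierCoeff f k * fourier k x

/-- `Λⁿ`: Fourier multiplier `|k|ⁿ`. -/
def Lamn (n : ℕ) (f : AddCircle (2 * Real.pi) → ℂ) : AddCircle (2 * Real.pi) → ℂ :=
  fun x => ∑' k : ℤ, ((|k| : ℤ) : ℂ) ^ n * fourierCoeff f k * fourier k x

/-- `∂₁ⁿ`: Fourier multiplier `(ik)ⁿ` (spatial derivative of smooth periodic functions). -/
def Dn (n : ℕ) (f : AddCircle (2 * Real.pi) → ℂ) : AddCircle (2 * Real.pi) → ℂ :=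
  fun x => ∑' k : ℤ, (Complex.I * (k : ℂ)) ^ n * fourierCoeff f k * fourier k x

/-- A smooth (rapidly decaying Fourier coefficients) real-valued zero-mean function on `S¹`,
given by the sum of its Fourier series. -/
def IsNice (f : AddCircle (2 * Real.pi) → ℂ) : Prop :=
  (∀ n : ℕ, Summable fun k : ℤ => ((|k| : ℤ) : ℝ) ^ n * ‖fourierCoeff f k‖) ∧
  (∀ x, (f x).im = 0) ∧ fourierCoeff f 0 = 0 ∧
  (∀ x, f x = ∑' k : ℤ, fourierCoeff f k * fourier k x)

/-! ### Auxiliary development -/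

open AddCircle

local notation "TT" => 2 * Real.pi

lemma norm_fourier (k : ℤ) (x : AddCircle TT) : ‖fourier k x‖ = 1 := by
  rw [fourier_apply, Circle.norm_coe]

lemma fourierCoeff_fourier_ite (k n : ℤ) :
    fourierCoeff (⇑(fourier k) : AddCircle TT → ℂ) n = if n = k then 1 else 0 := by
  have h := orthonormal_iff_ite.mp (orthonormal_fourier (T := TT)) n k
  rw [ContinuousMap.inner_toLp haarAddCircle (fourier n) (fourier k)] at h
  rw [fourierCoeff, ← h]
  apply integral_congr_ae
  filter_upwards with t
  rw [← fourier_neg, smul_eq_mul, mul_comm]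

/-- A function given by a Fourier coefficient sequence. -/
def Fser (a : ℤ → ℂ) : AddCircle TT → ℂ := fun x => ∑' k : ℤ, a k * fourier k x

lemma fourierCoeff_Fser {a : ℤ → ℂ} (ha : Summable fun k => ‖a k‖) (n : ℤ) :
    fourierCoeff (Fser a) n = a n := by
  have hmeas : ∀ k : ℤ, AEStronglyMeasurable
      (fun t : AddCircle TT => fourier (-n) t • (a k * fourier k t)) haarAddCircle := by
    intro k
    exact (((map_continuous (fourier (-n))).smul
      (continuous_const.mul (map_continuous (fourier k))))).aestronglyMeasurable
  have hnorm : ∀ k (t : AddCircle TT), ‖fourier (-n) t • (a k * fourier k t)‖ = ‖a k‖ := by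
    intro k t
    rw [smul_eq_mul, norm_mul, norm_mul, norm_fourier, norm_fourier, one_mul, mul_one]
  have hlint : ∑' k : ℤ, ∫⁻ t : AddCircle TT, ‖fourier (-n) t • (a k * fourier k t)‖₊
      ∂haarAddCircle ≠ ⊤ := by
    have : ∀ k : ℤ, ∫⁻ t : AddCircle TT, ‖fourier (-n) t • (a k * fourier k t)‖₊
        ∂haarAddCircle = (‖a k‖₊ : ENNReal) := by
      intro k
      have : (fun t : AddCircle TT => (‖fourier (-n) t • (a k * fourier k t)‖₊ : ENNReal))
          = fun _ => (‖a k‖₊ : ENNReal) := by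
        funext t
        congr 1
        ext
        exact hnorm k t
      rw [this, MeasureTheory.lintegral_const, measure_univ, mul_one]
    simp_rw [this]
    refine ENNReal.tsum_coe_ne_top_iff_summable.mpr ?_
    rw [← NNReal.summable_coe]
    simpa using ha
  have key : fourierCoeff (Fser a) n
      = ∑' k : ℤ, ∫ t : AddCircle TT, fourier (-n) t • (a k * fourier k t) ∂haarAddCircle := by
    rw [fourierCoeff, ← integral_tsum hmeas hlint]
    congr 1
    funext t
    rw [Fser, ← tsum_const_smul'' (fourier (-n) t)]
  rw [key]
  have : ∀ k : ℤ, ∫ t : AddCircle TT, fourier (-n) t • (a k * fourier k t) ∂haarAddCircle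
      = a k * (if n = k then 1 else 0) := by
    intro k
    rw [← fourierCoeff_fourier_ite k n, fourierCoeff, ← integral_const_mul]
    congr 1; funext t
    simp only [smul_eq_mul]; ring
  simp_rw [this, mul_ite, mul_one, mul_zero]
  exact tsum_eq_single n (by intro k hk; simp [Ne.symm hk]) |>.trans (by simp)

/-- Rapidly decaying coefficient sequences. -/
def Rap (a : ℤ → ℂ) : Prop := ∀ n : ℕ, Summable fun k : ℤ => ((|k| : ℤ) : ℝ) ^ n * ‖a k‖

lemma Rap.norm_summable {a : ℤ → ℂ} (ha : Rap a) : Summable fun k => ‖a k‖ := by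
  simpa using ha 0

lemma one_add_pow_le {x : ℝ} (hx : 0 ≤ x) (n : ℕ) : (1 + x) ^ n ≤ 2 ^ n * (1 + x ^ n) := by
  rcases le_total x 1 with h | h
  · calc (1 + x) ^ n ≤ 2 ^ n := by
          apply pow_le_pow_left₀ (by linarith) (by linarith)
        _ ≤ 2 ^ n * (1 + x ^ n) := by
          nlinarith [pow_nonneg hx n, pow_pos (zero_lt_two (α := ℝ)) n]
  · calc (1 + x) ^ n ≤ (2 * x) ^ n := by
          apply pow_le_pow_left₀ (by linarith) (by linarith)
        _ = 2 ^ n * x ^ n := by rw [mul_pow]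
        _ ≤ 2 ^ n * (1 + x ^ n) := by
          nlinarith [pow_pos (zero_lt_two (α := ℝ)) n, pow_nonneg hx n]

lemma Rap.one_add {a : ℤ → ℂ} (ha : Rap a) (n : ℕ) :
    Summable fun k : ℤ => (1 + ((|k| : ℤ) : ℝ)) ^ n * ‖a k‖ := by
  refine Summable.of_nonneg_of_le (fun k => by positivity) (fun k => ?_)
    (((ha 0).add (ha n)).mul_left (2 ^ n))
  have hk : (0:ℝ) ≤ ((|k| : ℤ) : ℝ) := by positivity
  calc (1 + ((|k| : ℤ) : ℝ)) ^ n * ‖a k‖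
      ≤ 2 ^ n * (1 + ((|k| : ℤ) : ℝ) ^ n) * ‖a k‖ := by
        apply mul_le_mul_of_nonneg_right (one_add_pow_le hk n) (norm_nonneg _)
    _ = 2 ^ n * (((|k| : ℤ) : ℝ) ^ 0 * ‖a k‖ + ((|k| : ℤ) : ℝ) ^ n * ‖a k‖) := by ring
    _ ≤ _ := le_refl _

/-- the basic summable majorant on `ℤ × ℤ` -/
def maj (a b : ℤ → ℂ) (n : ℕ) : ℤ × ℤ → ℝ := fun q =>
  ((1 + ((|q.1| : ℤ) : ℝ)) ^ n * ‖a q.1‖) * ((1 + ((|q.2| : ℤ) : ℝ)) ^ n * ‖b q.2‖)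

lemma summable_maj {a b : ℤ → ℂ} (ha : Rap a) (hb : Rap b) (n : ℕ) :
    Summable (maj a b n) := by
  apply Summable.mul_of_nonneg (ha.one_add n) (hb.one_add n) <;>
    · intro k; dsimp only; positivity

lemma term_summable {a b : ℤ → ℂ} (ha : Rap a) (hb : Rap b) {F : ℤ × ℤ → ℂ}
    (C : ℝ) (n : ℕ) (hF : ∀ q, ‖F q‖ ≤ C * maj a b n q) : Summable F :=
  Summable.of_norm_bounded ((summable_maj ha hb n).mul_left C) hF

lemma absp_le (m j : ℤ) :
    (1 : ℝ) + ((|m + j| : ℤ) : ℝ) ≤ (1 + ((|m| : ℤ) : ℝ)) * (1 + ((|j| : ℤ) : ℝ)) := by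
  have h := abs_add_le m j
  have h1 : (0:ℤ) ≤ |m| := abs_nonneg m
  have h2 : (0:ℤ) ≤ |j| := abs_nonneg j
  have : ((|m + j| : ℤ) : ℝ) ≤ ((|m| : ℤ) : ℝ) + ((|j| : ℤ) : ℝ) := by exact_mod_cast h
  have h1' : (0:ℝ) ≤ ((|m| : ℤ) : ℝ) := by exact_mod_cast h1
  have h2' : (0:ℝ) ≤ ((|j| : ℤ) : ℝ) := by exact_mod_cast h2
  nlinarith

lemma absp_pow_le (m j : ℤ) (n : ℕ) :
    ((1 : ℝ) + ((|m + j| : ℤ) : ℝ)) ^ n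
      ≤ (1 + ((|m| : ℤ) : ℝ)) ^ n * (1 + ((|j| : ℤ) : ℝ)) ^ n := by
  rw [← mul_pow]
  exact pow_le_pow_left₀ (by positivity) (absp_le m j) n

/-- the reindexing equivalence  `(p, m) ↦ (m, p - m)` -/
def eqv : ℤ × ℤ ≃ ℤ × ℤ where
  toFun q := (q.2, q.1 - q.2)
  invFun q := (q.1 + q.2, q.1)
  left_inv q := by simp
  right_inv q := by simp

lemma inj_slice (p : ℤ) : Function.Injective (fun m : ℤ => ((m, p - m) : ℤ × ℤ)) := by
  intro m m' h
  exact (Prod.mk.injEq _ _ _ _).mp h |>.1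

/-- discrete convolution -/
def convC (a b : ℤ → ℂ) : ℤ → ℂ := fun p => ∑' m : ℤ, a m * b (p - m)

lemma maj_fiber_summable {a b : ℤ → ℂ} (ha : Rap a) (hb : Rap b) (n : ℕ) (p : ℤ) :
    Summable fun m : ℤ => maj a b n (m, p - m) :=
  (summable_maj ha hb n).comp_injective (inj_slice p)

lemma summable_t {a b : ℤ → ℂ} (ha : Rap a) (hb : Rap b) (n : ℕ) :
    Summable fun p : ℤ => ∑' m : ℤ, maj a b n (m, p - m) := by
  have h1 : Summable (maj a b n ∘ eqv) := (eqv.summable_iff).mpr (summable_maj ha hb n)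
  exact HasSum.summable <| HasSum.prod_fiberwise h1.hasSum
    (fun p => (maj_fiber_summable ha hb n p).hasSum)

lemma norms_fiber_summable {a b : ℤ → ℂ} (ha : Rap a) (hb : Rap b) (p : ℤ) :
    Summable fun m : ℤ => ‖a m * b (p - m)‖ := by
  refine Summable.of_nonneg_of_le (fun m => norm_nonneg _) (fun m => ?_)
    (maj_fiber_summable ha hb 0 p)
  rw [norm_mul]
  simp [maj]

lemma conv_rap {a b : ℤ → ℂ} (ha : Rap a) (hb : Rap b) : Rap (convC a b) := by
  intro n
  refine Summable.of_nonneg_of_le (fun p => by positivity) (fun p => ?_) (summable_t ha hb n)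
  calc ((|p| : ℤ) : ℝ) ^ n * ‖convC a b p‖
      ≤ ((|p| : ℤ) : ℝ) ^ n * ∑' m : ℤ, ‖a m * b (p - m)‖ := by
        apply mul_le_mul_of_nonneg_left (norm_tsum_le_tsum_norm (norms_fiber_summable ha hb p))
        positivity
    _ = ∑' m : ℤ, ((|p| : ℤ) : ℝ) ^ n * ‖a m * b (p - m)‖ := by
        rw [tsum_mul_left]
    _ ≤ ∑' m : ℤ, maj a b n (m, p - m) := by
        apply Summable.tsum_le_tsum _ ((norms_fiber_summable ha hb p).mul_left _)
          (maj_fiber_summable ha hb n p)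
        intro m
        rw [norm_mul, maj]
        have h0 : ((|p| : ℤ) : ℝ) ^ n
            ≤ (1 + ((|m| : ℤ) : ℝ)) ^ n * (1 + ((|p - m| : ℤ) : ℝ)) ^ n := by
          have := absp_pow_le m (p - m) n
          rw [add_sub_cancel] at this
          refine le_trans (pow_le_pow_left₀ (by positivity) ?_ n) this
          have : (0:ℝ) ≤ ((|p| : ℤ):ℝ) := by positivity
          linarith
        calc ((|p| : ℤ) : ℝ) ^ n * (‖a m‖ * ‖b (p - m)‖)
            ≤ ((1 + ((|m| : ℤ) : ℝ)) ^ n * (1 + ((|p - m| : ℤ) : ℝ)) ^ n)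
                * (‖a m‖ * ‖b (p - m)‖) := by
              apply mul_le_mul_of_nonneg_right h0 (by positivity)
          _ = _ := by ring

lemma G_summable {a b : ℤ → ℂ} (ha : Rap a) (hb : Rap b) {μ : ℤ → ℂ} {C : ℝ} (hC : 0 ≤ C)
    (hμ : ∀ k, ‖μ k‖ ≤ C * (1 + ((|k| : ℤ) : ℝ)) ^ 3) (x : AddCircle TT) :
    Summable fun q : ℤ × ℤ => μ (q.1 + q.2) * (a q.1 * b q.2) * fourier (q.1 + q.2) x := by
  refine term_summable ha hb C 3 (fun q => ?_)
  rw [norm_mul, norm_mul, norm_mul, norm_fourier, mul_one]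
  calc ‖μ (q.1 + q.2)‖ * (‖a q.1‖ * ‖b q.2‖)
      ≤ (C * (1 + ((|q.1 + q.2| : ℤ) : ℝ)) ^ 3) * (‖a q.1‖ * ‖b q.2‖) := by
        apply mul_le_mul_of_nonneg_right (hμ _) (by positivity)
    _ ≤ (C * ((1 + ((|q.1| : ℤ) : ℝ)) ^ 3 * (1 + ((|q.2| : ℤ) : ℝ)) ^ 3))
          * (‖a q.1‖ * ‖b q.2‖) := by
        apply mul_le_mul_of_nonneg_right _ (by positivity)
        apply mul_le_mul_of_nonneg_left (absp_pow_le q.1 q.2 3) hC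
    _ = C * maj a b 3 q := by rw [maj]; ring

lemma summand_summable {a : ℤ → ℂ} (ha : Summable fun k => ‖a k‖) (x : AddCircle TT) :
    Summable fun k : ℤ => a k * fourier k x := by
  refine Summable.of_norm ?_
  have : (fun k : ℤ => ‖a k * fourier k x‖) = fun k => ‖a k‖ := by
    funext k; rw [norm_mul, norm_fourier, mul_one]
  rw [this]; exact ha

lemma fiber_summable {a b : ℤ → ℂ} (ha : Rap a) (hb : Rap b) (μ : ℤ → ℂ) (p : ℤ)
    (x : AddCircle TT) :
    Summable fun m : ℤ => μ p * (a m * b (p - m)) * fourier p x := by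
  refine Summable.of_norm_bounded ((maj_fiber_summable ha hb 0 p).mul_left ‖μ p‖) (fun m => ?_)
  rw [norm_mul, norm_mul, norm_fourier, mul_one, norm_mul, maj]
  simp only [pow_zero, one_mul]
  exact le_refl _

lemma expand {a b : ℤ → ℂ} (ha : Rap a) (hb : Rap b) {μ : ℤ → ℂ} {C : ℝ} (hC : 0 ≤ C)
    (hμ : ∀ k, ‖μ k‖ ≤ C * (1 + ((|k| : ℤ) : ℝ)) ^ 3) (x : AddCircle TT) :
    Fser (fun p => μ p * convC a b p) x
      = ∑' q : ℤ × ℤ, μ (q.1 + q.2) * (a q.1 * b q.2) * fourier (q.1 + q.2) x := by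
  have hG := G_summable ha hb hC hμ x
  set G : ℤ × ℤ → ℂ := fun q => μ (q.1 + q.2) * (a q.1 * b q.2) * fourier (q.1 + q.2) x
    with hGdef
  have h2 : (fun q : ℤ × ℤ => G (eqv q))
      = fun q : ℤ × ℤ => μ q.1 * (a q.2 * b (q.1 - q.2)) * fourier q.1 x := by
    funext q
    have : q.2 + (q.1 - q.2) = q.1 := by ring
    simp only [hGdef, eqv, Equiv.coe_fn_mk, this]
  have h1 : ∑' q, G q = ∑' q : ℤ × ℤ, μ q.1 * (a q.2 * b (q.1 - q.2)) * fourier q.1 x := by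
    rw [← h2]
    exact (Equiv.tsum_eq eqv G).symm
  have h3 : Summable fun q : ℤ × ℤ => μ q.1 * (a q.2 * b (q.1 - q.2)) * fourier q.1 x := by
    rw [← h2]
    exact (eqv.summable_iff).mpr hG
  rw [h1, Summable.tsum_prod' h3 (fun p => fiber_summable ha hb μ p x)]
  rw [Fser]
  refine tsum_congr fun p => ?_
  have : ∀ m : ℤ, μ p * (a m * b (p - m)) * fourier p x
      = μ p * ((a m * b (p - m)) * fourier p x) := fun m => by ring
  rw [tsum_congr this, tsum_mul_left, tsum_mul_right, convC]
  ring

lemma Fser_mul {a b : ℤ → ℂ} (ha : Rap a) (hb : Rap b) (x : AddCircle TT) :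
    Fser a x * Fser b x = ∑' q : ℤ × ℤ, (a q.1 * b q.2) * fourier (q.1 + q.2) x := by
  have hna : Summable fun k : ℤ => ‖a k * fourier k x‖ := by
    have : (fun k : ℤ => ‖a k * fourier k x‖) = fun k => ‖a k‖ := by
      funext k; rw [norm_mul, norm_fourier, mul_one]
    rw [this]
    simpa using ha 0
  have hnb : Summable fun k : ℤ => ‖b k * fourier k x‖ := by
    have : (fun k : ℤ => ‖b k * fourier k x‖) = fun k => ‖b k‖ := by
      funext k; rw [norm_mul, norm_fourier, mul_one]
    rw [this]
    simpa using hb 0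
  rw [Fser, Fser, Summable.tsum_mul_tsum hna.of_norm hnb.of_norm (hna.mul_norm hnb).of_norm]
  refine tsum_congr fun q => ?_
  rw [fourier_add]
  ring

lemma Fser_conv {a b : ℤ → ℂ} (ha : Rap a) (hb : Rap b) :
    (fun y => Fser a y * Fser b y) = Fser (convC a b) := by
  funext x
  have hμ : ∀ k : ℤ, ‖(1 : ℂ)‖ ≤ 1 * (1 + ((|k| : ℤ) : ℝ)) ^ 3 := by
    intro k
    rw [norm_one, one_mul]
    exact one_le_pow₀ (le_add_of_nonneg_right (by positivity))
  have h := expand (μ := fun _ => (1:ℂ)) ha hb zero_le_one (fun k => by simpa using hμ k) x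
  simp only [one_mul] at h
  rw [Fser_mul ha hb x, ← h, Fser]

lemma Gs_one {a b : ℤ → ℂ} (ha : Rap a) (hb : Rap b) (x : AddCircle TT) :
    Summable fun q : ℤ × ℤ => (a q.1 * b q.2) * fourier (q.1 + q.2) x := by
  have hμ : ∀ k : ℤ, ‖(fun _ : ℤ => (1:ℂ)) k‖ ≤ 1 * (1 + ((|k| : ℤ) : ℝ)) ^ 3 := by
    intro k
    rw [norm_one, one_mul]
    exact one_le_pow₀ (le_add_of_nonneg_right (by positivity))
  have := G_summable ha hb zero_le_one hμ x
  simpa using this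

/-! operators applied to series -/

lemma Dn_Fser (n : ℕ) {c : ℤ → ℂ} (hc : Rap c) :
    Dn n (Fser c) = Fser (fun k => (Complex.I * (k : ℂ)) ^ n * c k) := by
  funext x
  exact tsum_congr fun k => by rw [fourierCoeff_Fser hc.norm_summable]

lemma Lamn_Fser (n : ℕ) {c : ℤ → ℂ} (hc : Rap c) :
    Lamn n (Fser c) = Fser (fun k => ((|k| : ℤ) : ℂ) ^ n * c k) := by
  funext x
  exact tsum_congr fun k => by rw [fourierCoeff_Fser hc.norm_summable]

lemma Hop_Fser {c : ℤ → ℂ} (hc : Rap c) :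
    Hop (Fser c) = Fser (fun k => -Complex.I * (k.sign : ℂ) * c k) := by
  funext x
  exact tsum_congr fun k => by rw [fourierCoeff_Fser hc.norm_summable]

/-! Rap stability -/

lemma Rap.mult {c : ℤ → ℂ} (hc : Rap c) {μ : ℤ → ℂ} {C : ℝ} (hC : 0 ≤ C)
    (hμ : ∀ k, ‖μ k‖ ≤ C * (1 + ((|k| : ℤ) : ℝ)) ^ 3) : Rap (fun k => μ k * c k) := by
  intro n
  refine Summable.of_nonneg_of_le (fun k => by positivity) (fun k => ?_)
    ((((hc n).add (hc (n + 3))).mul_left (C * 2 ^ 3)))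
  have hx : (0:ℝ) ≤ ((|k| : ℤ) : ℝ) := by positivity
  calc ((|k| : ℤ) : ℝ) ^ n * ‖μ k * c k‖
      = ((|k| : ℤ) : ℝ) ^ n * (‖μ k‖ * ‖c k‖) := by rw [norm_mul]
    _ ≤ ((|k| : ℤ) : ℝ) ^ n * ((C * (1 + ((|k| : ℤ) : ℝ)) ^ 3) * ‖c k‖) := by
        apply mul_le_mul_of_nonneg_left
          (mul_le_mul_of_nonneg_right (hμ k) (norm_nonneg _)) (by positivity)
    _ ≤ ((|k| : ℤ) : ℝ) ^ n * ((C * (2 ^ 3 * (1 + ((|k| : ℤ) : ℝ) ^ 3))) * ‖c k‖) := by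
        apply mul_le_mul_of_nonneg_left _ (by positivity)
        apply mul_le_mul_of_nonneg_right _ (norm_nonneg _)
        exact mul_le_mul_of_nonneg_left (one_add_pow_le hx 3) hC
    _ = C * 2 ^ 3 * (((|k| : ℤ) : ℝ) ^ n * ‖c k‖ + ((|k| : ℤ) : ℝ) ^ (n + 3) * ‖c k‖) := by
        rw [pow_add]; ring

lemma Rap.subR {c c' : ℤ → ℂ} (hc : Rap c) (hc' : Rap c') : Rap (fun k => c k - c' k) := by
  intro n
  refine Summable.of_nonneg_of_le (fun k => by positivity) (fun k => ?_) ((hc n).add (hc' n))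
  have := norm_sub_le (c k) (c' k)
  have hx : (0:ℝ) ≤ ((|k| : ℤ) : ℝ) ^ n := by positivity
  nlinarith [norm_nonneg (c k), norm_nonneg (c' k)]

lemma Rap.addR {c c' : ℤ → ℂ} (hc : Rap c) (hc' : Rap c') : Rap (fun k => c k + c' k) := by
  intro n
  refine Summable.of_nonneg_of_le (fun k => by positivity) (fun k => ?_) ((hc n).add (hc' n))
  have := norm_add_le (c k) (c' k)
  have hx : (0:ℝ) ≤ ((|k| : ℤ) : ℝ) ^ n := by positivity
  nlinarith [norm_nonneg (c k), norm_nonneg (c' k)]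

/-! Fser algebra -/

lemma Fser_sub {c c' : ℤ → ℂ} (hc : Summable fun k => ‖c k‖) (hc' : Summable fun k => ‖c' k‖) :
    Fser (fun k => c k - c' k) = fun x => Fser c x - Fser c' x := by
  funext x
  rw [Fser, Fser, Fser, ← Summable.tsum_sub (summand_summable hc x) (summand_summable hc' x)]
  exact tsum_congr fun k => by ring

lemma Fser_add {c c' : ℤ → ℂ} (hc : Summable fun k => ‖c k‖) (hc' : Summable fun k => ‖c' k‖) :
    Fser (fun k => c k + c' k) = fun x => Fser c x + Fser c' x := by
  funext x
  rw [Fser, Fser, Fser, ← Summable.tsum_add (summand_summable hc x) (summand_summable hc' x)]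
  exact tsum_congr fun k => by ring

lemma Fser_two_mul {c : ℤ → ℂ} : (fun x => 2 * Fser c x) = Fser (fun k => 2 * c k) := by
  funext x
  rw [Fser, Fser, ← tsum_mul_left]
  exact tsum_congr fun k => by ring

lemma Fser_congr {c c' : ℤ → ℂ} (h : ∀ k, c k = c' k) : Fser c = Fser c' := by
  funext x; exact tsum_congr fun k => by rw [h k]

/-! multiplier norm bounds -/

lemma pow_abs_le3 (k : ℤ) (n : ℕ) (hn : n ≤ 3) :
    ((|k| : ℤ) : ℝ) ^ n ≤ (1 + ((|k| : ℤ) : ℝ)) ^ 3 := by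
  have hx : (0:ℝ) ≤ ((|k| : ℤ) : ℝ) := by positivity
  calc ((|k| : ℤ) : ℝ) ^ n ≤ (1 + ((|k| : ℤ) : ℝ)) ^ n :=
        pow_le_pow_left₀ hx (by linarith) n
    _ ≤ (1 + ((|k| : ℤ) : ℝ)) ^ 3 := pow_le_pow_right₀ (by linarith) hn

lemma norm_Ik (k : ℤ) : ‖Complex.I * (k : ℂ)‖ = ((|k| : ℤ) : ℝ) := by
  rw [norm_mul, Complex.norm_I, one_mul, Complex.norm_intCast, Int.cast_abs]

lemma norm_absC (k : ℤ) : ‖(((|k| : ℤ) : ℂ))‖ = ((|k| : ℤ) : ℝ) := by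
  rw [Complex.norm_intCast]
  norm_cast
  exact abs_abs k

lemma mbD (n : ℕ) (hn : n ≤ 3) (k : ℤ) :
    ‖(Complex.I * (k : ℂ)) ^ n‖ ≤ 1 * (1 + ((|k| : ℤ) : ℝ)) ^ 3 := by
  rw [norm_pow, norm_Ik, one_mul]; exact pow_abs_le3 k n hn

lemma mbL (k : ℤ) : ‖(((|k| : ℤ) : ℂ)) ^ 1‖ ≤ 1 * (1 + ((|k| : ℤ) : ℝ)) ^ 3 := by
  rw [norm_pow, norm_absC, one_mul]; exact pow_abs_le3 k 1 (by norm_num)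

lemma mbC (k : ℤ) : ‖(Complex.I * (k : ℂ)) ^ 2 * (((|k| : ℤ) : ℂ)) ^ 1‖
    ≤ 1 * (1 + ((|k| : ℤ) : ℝ)) ^ 3 := by
  rw [norm_mul, norm_pow, norm_pow, norm_Ik, norm_absC, one_mul, ← pow_add]
  exact pow_abs_le3 k (2 + 1) (by norm_num)

lemma mbDD (k : ℤ) : ‖(Complex.I * (k : ℂ)) ^ 1 * (Complex.I * (k : ℂ)) ^ 2‖
    ≤ 1 * (1 + ((|k| : ℤ) : ℝ)) ^ 3 := by
  rw [norm_mul, norm_pow, norm_pow, norm_Ik, one_mul, ← pow_add]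
  exact pow_abs_le3 k (1 + 2) (by norm_num)

lemma mbF (k : ℤ) : ‖(((|k| : ℤ) : ℂ)) ^ 1 * 2‖ ≤ 2 * (1 + ((|k| : ℤ) : ℝ)) ^ 3 := by
  rw [norm_mul, norm_pow, norm_absC]
  have h2 : ‖(2:ℂ)‖ = 2 := by norm_num
  rw [h2, pow_one]
  have := pow_abs_le3 k 1 (by norm_num)
  rw [pow_one] at this
  nlinarith [this, (by positivity : (0:ℝ) ≤ ((|k| : ℤ) : ℝ))]

lemma mbH (k : ℤ) : ‖-Complex.I * ((k.sign : ℤ) : ℂ)‖ ≤ 1 * (1 + ((|k| : ℤ) : ℝ)) ^ 3 := by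
  rw [norm_mul, norm_neg, Complex.norm_I, one_mul, Complex.norm_intCast, one_mul]
  have h1 : |((k.sign : ℤ) : ℝ)| ≤ 1 := by
    rcases lt_trichotomy k 0 with h | h | h
    · rw [Int.sign_eq_neg_one_of_neg h]; norm_num
    · subst h; norm_num
    · rw [Int.sign_eq_one_of_pos h]; norm_num
  calc |((k.sign : ℤ) : ℝ)| ≤ 1 := h1
    _ ≤ (1 + ((|k| : ℤ) : ℝ)) ^ 3 := one_le_pow₀ (le_add_of_nonneg_right (by positivity))

/-! named coefficient sequences -/

def c1 (h : AddCircle TT → ℂ) : ℤ → ℂ := fun k => (Complex.I * (k : ℂ)) ^ 1 * fourierCoeff h k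
def c2 (h : AddCircle TT → ℂ) : ℤ → ℂ := fun k => (Complex.I * (k : ℂ)) ^ 2 * fourierCoeff h k
def cH (h : AddCircle TT → ℂ) : ℤ → ℂ := fun k => -Complex.I * (k.sign : ℂ) * fourierCoeff h k
def cL (h : AddCircle TT → ℂ) : ℤ → ℂ := fun k => ((|k| : ℤ) : ℂ) ^ 1 * fourierCoeff h k
def cDL (h : AddCircle TT → ℂ) : ℤ → ℂ := fun k => (Complex.I * (k : ℂ)) ^ 1 * cL h k
def cL2 (h : AddCircle TT → ℂ) : ℤ → ℂ := fun k => ((|k| : ℤ) : ℂ) ^ 1 * c2 h k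
def cH2 (h : AddCircle TT → ℂ) : ℤ → ℂ := fun k => (Complex.I * (k : ℂ)) ^ 2 * cH h k

lemma key (f g : AddCircle TT → ℂ) (x : AddCircle TT) (q : ℤ × ℤ) :
    (c1 f q.1 * cDL g q.2) * fourier (q.1 + q.2) x
      - (Complex.I * ((q.1 + q.2 : ℤ) : ℂ)) ^ 2 * (c1 f q.1 * cH g q.2) * fourier (q.1 + q.2) x
      - (((|q.1 + q.2| : ℤ) : ℂ) ^ 1 * (fourierCoeff f q.1 * c2 g q.2) * fourier (q.1 + q.2) x
          - (fourierCoeff f q.1 * cL2 g q.2) * fourier (q.1 + q.2) x)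
      + ((Complex.I * ((q.1 + q.2 : ℤ) : ℂ)) ^ 2 * ((|q.1 + q.2| : ℤ) : ℂ) ^ 1
            * (fourierCoeff f q.1 * fourierCoeff g q.2) * fourier (q.1 + q.2) x
          - (Complex.I * ((q.1 + q.2 : ℤ) : ℂ)) ^ 2 * (fourierCoeff f q.1 * cL g q.2)
            * fourier (q.1 + q.2) x)
      - (((|q.1 + q.2| : ℤ) : ℂ) ^ 1 * (c2 f q.1 * fourierCoeff g q.2) * fourier (q.1 + q.2) x
          + ((|q.1 + q.2| : ℤ) : ℂ) ^ 1 * 2 * (c1 f q.1 * c1 g q.2) * fourier (q.1 + q.2) x)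
    = -((Complex.I * ((q.1 + q.2 : ℤ) : ℂ)) ^ 1 * (Complex.I * ((q.1 + q.2 : ℤ) : ℂ)) ^ 2
            * (fourierCoeff f q.1 * cH g q.2) * fourier (q.1 + q.2) x
        - (Complex.I * ((q.1 + q.2 : ℤ) : ℂ)) ^ 1 * (fourierCoeff f q.1 * cH2 g q.2)
            * fourier (q.1 + q.2) x) := by
  obtain ⟨m, j⟩ := q
  simp only [c1, c2, cH, cL, cDL, cL2, cH2]
  rcases lt_trichotomy j 0 with h | h | h
  · rw [Int.sign_eq_neg_one_of_neg h, abs_of_neg h]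
    push_cast
    linear_combination (Complex.I ^ 2 * ((m : ℂ) * (j : ℂ) ^ 2 + (m : ℂ) ^ 2 * (j : ℂ))
      * (fourierCoeff f m * (fourierCoeff g j * fourier (m + j) x))) * Complex.I_sq
  · subst h
    simp only [Int.sign_zero, Int.cast_zero, abs_zero, add_zero]
    ring
  · rw [Int.sign_eq_one_of_pos h, abs_of_pos h]
    push_cast
    linear_combination (-(Complex.I ^ 2) * ((m : ℂ) * (j : ℂ) ^ 2 + (m : ℂ) ^ 2 * (j : ℂ))
      * (fourierCoeff f m * (fourierCoeff g j * fourier (m + j) x))) * Complex.I_sq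

lemma mbTwo (k : ℤ) : ‖(2 : ℂ)‖ ≤ 2 * (1 + ((|k| : ℤ) : ℝ)) ^ 3 := by
  have h2 : ‖(2:ℂ)‖ = 2 := by norm_num
  rw [h2]
  nlinarith [one_le_pow₀ (le_add_of_nonneg_right
    (by positivity : (0:ℝ) ≤ ((|k| : ℤ) : ℝ))) (n := 3)]

/-- Grouping of the `O(α₁²)` nonlinear terms (Dias–Dyachenko–Zakharov model):
`∂₁f·∂₁Λg − ∂₁²(∂₁f·Hg) − [Λ,f]∂₁²g + ∂₁²([Λ,f]g) − Λ(∂₁²f·g + 2∂₁f·∂₁g)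
  = −∂₁([∂₁²,f]Hg)` pointwise, where `[∂₁²,f]w = ∂₁²(fw) − f·∂₁²w`. -/
theorem alpha1sq_grouping (f g : AddCircle (2 * Real.pi) → ℂ)
    (hf : IsNice f) (hg : IsNice g) :
    ∀ x, Dn 1 f x * Dn 1 (Lamn 1 g) x
        - Dn 2 (fun y => Dn 1 f y * Hop g y) x
        - (Lamn 1 (fun y => f y * Dn 2 g y) x - f x * Lamn 1 (Dn 2 g) x)
        + Dn 2 (fun y => Lamn 1 (fun z => f z * g z) y - f y * Lamn 1 g y) x
        - Lamn 1 (fun y => Dn 2 f y * g y + 2 * (Dn 1 f y * Dn 1 g y)) x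
      = -Dn 1 (fun y => Dn 2 (fun z => f z * Hop g z) y - f y * Dn 2 (Hop g) y) x := by
  intro x
  obtain ⟨hfs, -, -, hf4⟩ := hf
  obtain ⟨hgs, -, -, hg4⟩ := hg
  have haa : Rap (fourierCoeff f) := hfs
  have hbb : Rap (fourierCoeff g) := hgs
  have hc1f : Rap (c1 f) := haa.mult zero_le_one (mbD 1 (by norm_num))
  have hc2f : Rap (c2 f) := haa.mult zero_le_one (mbD 2 (by norm_num))
  have hc1g : Rap (c1 g) := hbb.mult zero_le_one (mbD 1 (by norm_num))
  have hc2g : Rap (c2 g) := hbb.mult zero_le_one (mbD 2 (by norm_num))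
  have hcHg : Rap (cH g) := hbb.mult zero_le_one mbH
  have hcLg : Rap (cL g) := hbb.mult zero_le_one mbL
  have hcDL : Rap (cDL g) := hcLg.mult zero_le_one (mbD 1 (by norm_num))
  have hcL2 : Rap (cL2 g) := hc2g.mult zero_le_one mbL
  have hcH2 : Rap (cH2 g) := hcHg.mult zero_le_one (mbD 2 (by norm_num))
  -- operator identities
  have eDL : Dn 1 (Lamn 1 g) = Fser (cDL g) := Dn_Fser 1 hcLg
  have eL2 : Lamn 1 (Dn 2 g) = Fser (cL2 g) := Lamn_Fser 1 hc2g
  have eH2 : Dn 2 (Hop g) = Fser (cH2 g) := Dn_Fser 2 hcHg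
  -- products as convolutions
  have hP1 : (fun y => Dn 1 f y * Hop g y) = Fser (convC (c1 f) (cH g)) :=
    Fser_conv hc1f hcHg
  have hP2 : (fun z => f z * g z) = Fser (convC (fourierCoeff f) (fourierCoeff g)) := by
    funext z; rw [hf4 z, hg4 z]; exact congrFun (Fser_conv haa hbb) z
  have hP3 : (fun y => f y * Lamn 1 g y) = Fser (convC (fourierCoeff f) (cL g)) := by
    funext z; rw [hf4 z]; exact congrFun (Fser_conv haa hcLg) z
  have hP4 : (fun y => f y * Dn 2 g y) = Fser (convC (fourierCoeff f) (c2 g)) := by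
    funext z; rw [hf4 z]; exact congrFun (Fser_conv haa hc2g) z
  have hP5 : (fun y => Dn 2 f y * g y) = Fser (convC (c2 f) (fourierCoeff g)) := by
    funext z; rw [hg4 z]; exact congrFun (Fser_conv hc2f hbb) z
  have hP6 : (fun y => Dn 1 f y * Dn 1 g y) = Fser (convC (c1 f) (c1 g)) :=
    Fser_conv hc1f hc1g
  have hP7 : (fun z => f z * Hop g z) = Fser (convC (fourierCoeff f) (cH g)) := by
    funext z; rw [hf4 z]; exact congrFun (Fser_conv haa hcHg) z
  have hP8 : (fun y => f y * Dn 2 (Hop g) y) = Fser (convC (fourierCoeff f) (cH2 g)) := by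
    funext z; rw [hf4 z, eH2]; exact congrFun (Fser_conv haa hcH2) z
  -- Term 1
  have hT1 : Dn 1 f x * Dn 1 (Lamn 1 g) x
      = ∑' q : ℤ × ℤ, (c1 f q.1 * cDL g q.2) * fourier (q.1 + q.2) x := by
    rw [eDL]; exact Fser_mul hc1f hcDL x
  -- Term 2
  have hT2 : Dn 2 (fun y => Dn 1 f y * Hop g y) x
      = ∑' q : ℤ × ℤ, (Complex.I * ((q.1 + q.2 : ℤ) : ℂ)) ^ 2 * (c1 f q.1 * cH g q.2)
          * fourier (q.1 + q.2) x := by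
    rw [hP1, Dn_Fser 2 (conv_rap hc1f hcHg)]
    exact expand hc1f hcHg zero_le_one (mbD 2 (by norm_num)) x
  -- Term 3a
  have hT3a : Lamn 1 (fun y => f y * Dn 2 g y) x
      = ∑' q : ℤ × ℤ, ((|q.1 + q.2| : ℤ) : ℂ) ^ 1 * (fourierCoeff f q.1 * c2 g q.2)
          * fourier (q.1 + q.2) x := by
    rw [hP4, Lamn_Fser 1 (conv_rap haa hc2g)]
    exact expand haa hc2g zero_le_one mbL x
  -- Term 3b
  have hT3b : f x * Lamn 1 (Dn 2 g) x
      = ∑' q : ℤ × ℤ, (fourierCoeff f q.1 * cL2 g q.2) * fourier (q.1 + q.2) x := by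
    rw [hf4 x, eL2]
    exact Fser_mul haa hcL2 x
  -- Term 4
  have hd4 : Rap (fun p => ((|p| : ℤ) : ℂ) ^ 1 * convC (fourierCoeff f) (fourierCoeff g) p
      - convC (fourierCoeff f) (cL g) p) :=
    ((conv_rap haa hbb).mult zero_le_one mbL).subR (conv_rap haa hcLg)
  have h41 : Lamn 1 (fun z => f z * g z)
      = Fser (fun p => ((|p| : ℤ) : ℂ) ^ 1 * convC (fourierCoeff f) (fourierCoeff g) p) := by
    rw [hP2]; exact Lamn_Fser 1 (conv_rap haa hbb)
  have h43 : (fun y => Lamn 1 (fun z => f z * g z) y - f y * Lamn 1 g y)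
      = Fser (fun p => ((|p| : ℤ) : ℂ) ^ 1 * convC (fourierCoeff f) (fourierCoeff g) p
          - convC (fourierCoeff f) (cL g) p) := by
    funext y
    calc Lamn 1 (fun z => f z * g z) y - f y * Lamn 1 g y
        = Fser (fun p => ((|p| : ℤ) : ℂ) ^ 1 * convC (fourierCoeff f) (fourierCoeff g) p) y
            - Fser (convC (fourierCoeff f) (cL g)) y := by
          rw [h41, show f y * Lamn 1 g y = Fser (convC (fourierCoeff f) (cL g)) y from
            congrFun hP3 y]
      _ = _ := (congrFun (Fser_sub ((conv_rap haa hbb).mult zero_le_one mbL).norm_summable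
            (conv_rap haa hcLg).norm_summable) y).symm
  have hT4 : Dn 2 (fun y => Lamn 1 (fun z => f z * g z) y - f y * Lamn 1 g y) x
      = (∑' q : ℤ × ℤ, (Complex.I * ((q.1 + q.2 : ℤ) : ℂ)) ^ 2 * ((|q.1 + q.2| : ℤ) : ℂ) ^ 1
            * (fourierCoeff f q.1 * fourierCoeff g q.2) * fourier (q.1 + q.2) x)
        - ∑' q : ℤ × ℤ, (Complex.I * ((q.1 + q.2 : ℤ) : ℂ)) ^ 2
            * (fourierCoeff f q.1 * cL g q.2) * fourier (q.1 + q.2) x := by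
    rw [h43]
    calc Dn 2 (Fser (fun p => ((|p| : ℤ) : ℂ) ^ 1 * convC (fourierCoeff f) (fourierCoeff g) p
            - convC (fourierCoeff f) (cL g) p)) x
        = Fser (fun p => ((Complex.I * (p : ℂ)) ^ 2 * ((|p| : ℤ) : ℂ) ^ 1)
              * convC (fourierCoeff f) (fourierCoeff g) p
            - (Complex.I * (p : ℂ)) ^ 2 * convC (fourierCoeff f) (cL g) p) x := by
          rw [Dn_Fser 2 hd4]
          exact congrFun (Fser_congr (fun p => by ring)) x
      _ = Fser (fun p => ((Complex.I * (p : ℂ)) ^ 2 * ((|p| : ℤ) : ℂ) ^ 1)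
              * convC (fourierCoeff f) (fourierCoeff g) p) x
            - Fser (fun p => (Complex.I * (p : ℂ)) ^ 2 * convC (fourierCoeff f) (cL g) p) x :=
          congrFun (Fser_sub ((conv_rap haa hbb).mult zero_le_one mbC).norm_summable
            ((conv_rap haa hcLg).mult zero_le_one (mbD 2 (by norm_num))).norm_summable) x
      _ = _ := congrArg₂ (· - ·) (expand haa hbb zero_le_one mbC x)
            (expand haa hcLg zero_le_one (mbD 2 (by norm_num)) x)
  -- Term 5
  have h53 : (fun y => Dn 2 f y * g y + 2 * (Dn 1 f y * Dn 1 g y))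
      = Fser (fun p => convC (c2 f) (fourierCoeff g) p + 2 * convC (c1 f) (c1 g) p) := by
    funext y
    calc Dn 2 f y * g y + 2 * (Dn 1 f y * Dn 1 g y)
        = Fser (convC (c2 f) (fourierCoeff g)) y + 2 * Fser (convC (c1 f) (c1 g)) y := by
          rw [show Dn 2 f y * g y = Fser (convC (c2 f) (fourierCoeff g)) y from congrFun hP5 y,
              show Dn 1 f y * Dn 1 g y = Fser (convC (c1 f) (c1 g)) y from congrFun hP6 y]
      _ = Fser (convC (c2 f) (fourierCoeff g)) y
            + Fser (fun p => 2 * convC (c1 f) (c1 g) p) y := by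
          rw [show (2:ℂ) * Fser (convC (c1 f) (c1 g)) y
            = Fser (fun p => 2 * convC (c1 f) (c1 g) p) y from congrFun Fser_two_mul y]
      _ = _ := (congrFun (Fser_add (conv_rap hc2f hbb).norm_summable
            ((conv_rap hc1f hc1g).mult (by norm_num) mbTwo).norm_summable) y).symm
  have hcadd : Rap (fun p => convC (c2 f) (fourierCoeff g) p + 2 * convC (c1 f) (c1 g) p) :=
    (conv_rap hc2f hbb).addR ((conv_rap hc1f hc1g).mult (by norm_num) mbTwo)
  have hT5 : Lamn 1 (fun y => Dn 2 f y * g y + 2 * (Dn 1 f y * Dn 1 g y)) x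
      = (∑' q : ℤ × ℤ, ((|q.1 + q.2| : ℤ) : ℂ) ^ 1 * (c2 f q.1 * fourierCoeff g q.2)
            * fourier (q.1 + q.2) x)
        + ∑' q : ℤ × ℤ, ((|q.1 + q.2| : ℤ) : ℂ) ^ 1 * 2 * (c1 f q.1 * c1 g q.2)
            * fourier (q.1 + q.2) x := by
    rw [h53]
    calc Lamn 1 (Fser (fun p => convC (c2 f) (fourierCoeff g) p
            + 2 * convC (c1 f) (c1 g) p)) x
        = Fser (fun p => ((|p| : ℤ) : ℂ) ^ 1 * convC (c2 f) (fourierCoeff g) p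
            + (((|p| : ℤ) : ℂ) ^ 1 * 2) * convC (c1 f) (c1 g) p) x := by
          rw [Lamn_Fser 1 hcadd]
          exact congrFun (Fser_congr (fun p => by ring)) x
      _ = Fser (fun p => ((|p| : ℤ) : ℂ) ^ 1 * convC (c2 f) (fourierCoeff g) p) x
            + Fser (fun p => (((|p| : ℤ) : ℂ) ^ 1 * 2) * convC (c1 f) (c1 g) p) x :=
          congrFun (Fser_add ((conv_rap hc2f hbb).mult zero_le_one mbL).norm_summable
            ((conv_rap hc1f hc1g).mult (by norm_num) mbF).norm_summable) x
      _ = _ := congrArg₂ (· + ·) (expand hc2f hbb zero_le_one mbL x)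
            (expand hc1f hc1g (by norm_num) mbF x)
  -- RHS
  have hR1 : Dn 2 (fun z => f z * Hop g z)
      = Fser (fun p => (Complex.I * (p : ℂ)) ^ 2 * convC (fourierCoeff f) (cH g) p) := by
    rw [hP7]; exact Dn_Fser 2 (conv_rap haa hcHg)
  have hdR : Rap (fun p => (Complex.I * (p : ℂ)) ^ 2 * convC (fourierCoeff f) (cH g) p
      - convC (fourierCoeff f) (cH2 g) p) :=
    ((conv_rap haa hcHg).mult zero_le_one (mbD 2 (by norm_num))).subR (conv_rap haa hcH2)
  have hR3 : (fun y => Dn 2 (fun z => f z * Hop g z) y - f y * Dn 2 (Hop g) y)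
      = Fser (fun p => (Complex.I * (p : ℂ)) ^ 2 * convC (fourierCoeff f) (cH g) p
          - convC (fourierCoeff f) (cH2 g) p) := by
    funext y
    calc Dn 2 (fun z => f z * Hop g z) y - f y * Dn 2 (Hop g) y
        = Fser (fun p => (Complex.I * (p : ℂ)) ^ 2 * convC (fourierCoeff f) (cH g) p) y
            - Fser (convC (fourierCoeff f) (cH2 g)) y := by
          rw [hR1, show f y * Dn 2 (Hop g) y = Fser (convC (fourierCoeff f) (cH2 g)) y from
            congrFun hP8 y]
      _ = _ := (congrFun (Fser_sub ((conv_rap haa hcHg).mult zero_le_one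
            (mbD 2 (by norm_num))).norm_summable (conv_rap haa hcH2).norm_summable) y).symm
  have hR : Dn 1 (fun y => Dn 2 (fun z => f z * Hop g z) y - f y * Dn 2 (Hop g) y) x
      = (∑' q : ℤ × ℤ, (Complex.I * ((q.1 + q.2 : ℤ) : ℂ)) ^ 1
            * (Complex.I * ((q.1 + q.2 : ℤ) : ℂ)) ^ 2 * (fourierCoeff f q.1 * cH g q.2)
            * fourier (q.1 + q.2) x)
        - ∑' q : ℤ × ℤ, (Complex.I * ((q.1 + q.2 : ℤ) : ℂ)) ^ 1
            * (fourierCoeff f q.1 * cH2 g q.2) * fourier (q.1 + q.2) x := by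
    rw [hR3]
    calc Dn 1 (Fser (fun p => (Complex.I * (p : ℂ)) ^ 2 * convC (fourierCoeff f) (cH g) p
            - convC (fourierCoeff f) (cH2 g) p)) x
        = Fser (fun p => ((Complex.I * (p : ℂ)) ^ 1 * (Complex.I * (p : ℂ)) ^ 2)
              * convC (fourierCoeff f) (cH g) p
            - (Complex.I * (p : ℂ)) ^ 1 * convC (fourierCoeff f) (cH2 g) p) x := by
          rw [Dn_Fser 1 hdR]
          exact congrFun (Fser_congr (fun p => by ring)) x
      _ = Fser (fun p => ((Complex.I * (p : ℂ)) ^ 1 * (Complex.I * (p : ℂ)) ^ 2)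
              * convC (fourierCoeff f) (cH g) p) x
            - Fser (fun p => (Complex.I * (p : ℂ)) ^ 1
              * convC (fourierCoeff f) (cH2 g) p) x :=
          congrFun (Fser_sub ((conv_rap haa hcHg).mult zero_le_one mbDD).norm_summable
            ((conv_rap haa hcH2).mult zero_le_one (mbD 1 (by norm_num))).norm_summable) x
      _ = _ := congrArg₂ (· - ·) (expand haa hcHg zero_le_one mbDD x)
            (expand haa hcH2 zero_le_one (mbD 1 (by norm_num)) x)
  -- summability of the ten double-sum families
  have hs1 : Summable fun q : ℤ × ℤ => (c1 f q.1 * cDL g q.2) * fourier (q.1 + q.2) x :=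
    Gs_one hc1f hcDL x
  have hs2 : Summable fun q : ℤ × ℤ => (Complex.I * ((q.1 + q.2 : ℤ) : ℂ)) ^ 2
      * (c1 f q.1 * cH g q.2) * fourier (q.1 + q.2) x :=
    G_summable hc1f hcHg zero_le_one (mbD 2 (by norm_num)) x
  have hs3 : Summable fun q : ℤ × ℤ => ((|q.1 + q.2| : ℤ) : ℂ) ^ 1
      * (fourierCoeff f q.1 * c2 g q.2) * fourier (q.1 + q.2) x :=
    G_summable haa hc2g zero_le_one mbL x
  have hs4 : Summable fun q : ℤ × ℤ => (fourierCoeff f q.1 * cL2 g q.2)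
      * fourier (q.1 + q.2) x :=
    Gs_one haa hcL2 x
  have hs5 : Summable fun q : ℤ × ℤ => (Complex.I * ((q.1 + q.2 : ℤ) : ℂ)) ^ 2
      * ((|q.1 + q.2| : ℤ) : ℂ) ^ 1 * (fourierCoeff f q.1 * fourierCoeff g q.2)
      * fourier (q.1 + q.2) x :=
    G_summable haa hbb zero_le_one mbC x
  have hs6 : Summable fun q : ℤ × ℤ => (Complex.I * ((q.1 + q.2 : ℤ) : ℂ)) ^ 2
      * (fourierCoeff f q.1 * cL g q.2) * fourier (q.1 + q.2) x :=
    G_summable haa hcLg zero_le_one (mbD 2 (by norm_num)) x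
  have hs7 : Summable fun q : ℤ × ℤ => ((|q.1 + q.2| : ℤ) : ℂ) ^ 1
      * (c2 f q.1 * fourierCoeff g q.2) * fourier (q.1 + q.2) x :=
    G_summable hc2f hbb zero_le_one mbL x
  have hs8 : Summable fun q : ℤ × ℤ => ((|q.1 + q.2| : ℤ) : ℂ) ^ 1 * 2
      * (c1 f q.1 * c1 g q.2) * fourier (q.1 + q.2) x :=
    G_summable hc1f hc1g (by norm_num) mbF x
  have hs9 : Summable fun q : ℤ × ℤ => (Complex.I * ((q.1 + q.2 : ℤ) : ℂ)) ^ 1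
      * (Complex.I * ((q.1 + q.2 : ℤ) : ℂ)) ^ 2 * (fourierCoeff f q.1 * cH g q.2)
      * fourier (q.1 + q.2) x :=
    G_summable haa hcHg zero_le_one mbDD x
  have hs10 : Summable fun q : ℤ × ℤ => (Complex.I * ((q.1 + q.2 : ℤ) : ℂ)) ^ 1
      * (fourierCoeff f q.1 * cH2 g q.2) * fourier (q.1 + q.2) x :=
    G_summable haa hcH2 zero_le_one (mbD 1 (by norm_num)) x
  rw [hT1, hT2, hT3a, hT3b, hT4, hT5, hR]
  exact ((((hs1.hasSum.sub hs2.hasSum).sub (hs3.hasSum.sub hs4.hasSum)).add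
      (hs5.hasSum.sub hs6.hasSum)).sub (hs7.hasSum.add hs8.hasSum)).tsum_eq.symm.trans
    ((tsum_congr (key f g x)).trans (((hs9.hasSum.sub hs10.hasSum)).neg.tsum_eq))
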